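/- arXiv:1304.5109 — 3 statements merged into one kernel-verified Lean document; each statement's English description precedes it below -/
import Mathlib

section
/- For every N ∈ ℕ, every strategy s from π(N)^{↓0} to π(N+1), and every column i ∈ ℕ, one has |s|_i ∈ {0,1}; that is, each column is fired at most once during any stabilization of π(N)^{↓0}. -/
open scoped Classical

/-- A configuration of KSPM: a sequence of height differences. -/
abbrev Config := ℕ → ℕ

/-- The result of firing column `i` in configuration `σ` (KSPM(D) rule). -/
def fireAt (D : ℕ) (σ : Config) (i : ℕ) : Config := fun j =>
  if j = i then σ i - D
  else if j + 1 = i then σ j + (D - 1)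
  else if j = i + D - 1 then σ j + 1
  else σ j

/-- `σ →_i σ'` : column `i` can be fired in `σ`, producing `σ'`. -/
def Step (D : ℕ) (σ : Config) (i : ℕ) (σ' : Config) : Prop :=
  D ≤ σ i ∧ σ' = fireAt D σ i

/-- `σ → σ'`. -/
def StepRel (D : ℕ) (σ σ' : Config) : Prop := ∃ i, Step D σ i σ'

/-- `σ →* σ'`. -/
def Reaches (D : ℕ) : Config → Config → Prop := Relation.ReflTransGen (StepRel D)

/-- A configuration is stable (a fixed point) when no transition applies. -/
def Stable (D : ℕ) (σ : Config) : Prop := ∀ i, σ i < D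

/-- `Exec D σ s σ'` : the strategy `s` leads from `σ` to `σ'`. -/
def Exec (D : ℕ) : Config → List ℕ → Config → Prop
  | σ, [], σ' => σ' = σ
  | σ, i :: s, σ' => D ≤ σ i ∧ Exec D (fireAt D σ i) s σ'

/-- The initial configuration with `N` stacked grains on column 0. -/
def grains (N : ℕ) : Config := fun i => if i = 0 then N else 0

/-- `σ^{↓0}` : one grain added on column 0. -/
def addGrain (σ : Config) : Config := fun i => if i = 0 then σ i + 1 else σ i

/-- `π(σ)` : the (unique) stable configuration reachable from `σ`. -/
noncomputable def piCfg (D : ℕ) (σ : Config) : Config :=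
  Classical.epsilon fun μ => Reaches D σ μ ∧ Stable D μ

/-- `π(N)` : the stable configuration reached from `N` stacked grains. -/
noncomputable def piN (D N : ℕ) : Config := piCfg D (grains N)

/-- The `k`-th avalanche: the lexicographically least strategy from
`π(k−1)^{↓0}` to `π(k)`. -/
noncomputable def avalanche (D k : ℕ) : List ℕ :=
  Classical.epsilon fun s =>
    Exec D (addGrain (piN D (k - 1))) s (piN D k) ∧
    ∀ s', Exec D (addGrain (piN D (k - 1))) s' (piN D k) →
      s = s' ∨ List.Lex (· < ·) s s'

/-- `p` is a peak of the strategy `s` : it is fired at some time, and is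
larger than every previously fired column. -/
def IsPeak (s : List ℕ) (p : ℕ) : Prop :=
  ∃ t : Fin s.length, s.get t = p ∧ ∀ t' : Fin s.length, t' < t → s.get t' < p

/-- An avalanche is dense from `l` : with `m` its greatest fired column, every
column of `[l, m]` is fired. -/
def DenseFrom (s : List ℕ) (l : ℕ) : Prop :=
  ∃ m, (∀ i, l ≤ i → i ≤ m → i ∈ s) ∧ ∀ i, m < i → i ∉ s

/-- `L'(D,k)` : the least column from which the `k`-th avalanche is dense. -/
noncomputable def Lp (D k : ℕ) : ℕ := sInf {l | DenseFrom (avalanche D k) l}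

/-- The global density column `L(D,N)`. -/
noncomputable def Lgdc (D N : ℕ) : ℕ := (Finset.Icc 1 N).sup (Lp D)

/-- Indices `k ∈ [1,N]` of the long avalanches up to `N` (those firing column
`L(D,N)+D−1`), in increasing order: this enumerates `Φ(D,N)`. -/
noncomputable def longList (D N : ℕ) : List ℕ :=
  (List.range (N + 1)).filter fun k =>
    decide (1 ≤ k ∧ Lgdc D N + D - 1 ∈ avalanche D k)

/-!
A configuration `π(N)^{↓0}` has fewer than `D` grains on every column except column `0`,
which has at most `D`. Look at the first moment some column `j` is about to fire for the second
time. Until then every column has fired at most once, so `j` has lost `D` grains and received at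
most `D - 1` from the firing of `j + 1` and at most one from the firing of `j - (D - 1)` (there is
no such column when `j = 0`). Hence `j` holds fewer than `D` grains and cannot fire.

That `π(N)` is stable at all needs termination: a firing preserves the number of grains
`∑ (i + 1) σ i` and raises the second moment `∑ i² σ i`, which is at most the square of the
number of grains.
-/

section

variable {D : ℕ}

theorem fireAt_apply_cast (hD : 2 ≤ D) {σ : Config} {j : ℕ} (hj : D ≤ σ j) (i : ℕ) :
    (fireAt D σ j i : ℤ) = σ i - (if i = j then (D : ℤ) else 0)
      + (if j = i + 1 then (D : ℤ) - 1 else 0) + (if i = j + (D - 1) then 1 else 0) := by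
  unfold fireAt
  by_cases hij : i = j
  · subst hij
    simp only [if_true]
    split_ifs <;> omega
  · split_ifs <;> omega

-- Configurations are arbitrary functions `ℕ → ℕ`, so sums are truncated at a bound `B`;
-- they are meaningful when the support lies below `B`.
def weightedSum (f : ℕ → ℤ) (B : ℕ) (σ : Config) : ℤ := ∑ i ∈ Finset.range B, f i * σ i

theorem weightedSum_eq_of_le {f : ℕ → ℤ} {B B' : ℕ} {σ : Config}
    (hσ : ∀ k, B ≤ k → σ k = 0) (hB : B ≤ B') : weightedSum f B' σ = weightedSum f B σ := by
  refine (Finset.sum_subset (Finset.range_subset_range.2 hB) fun k _ hk => ?_).symm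
  simp [hσ k (by simpa using hk)]

theorem weightedSum_fireAt (hD : 2 ≤ D) (f : ℕ → ℤ) {B : ℕ} {σ : Config} {j : ℕ}
    (hj : D ≤ σ j) (hB : j + D ≤ B) :
    weightedSum f B (fireAt D σ j) = weightedSum f B σ - D * f j
      + (if j = 0 then 0 else ((D : ℤ) - 1) * f (j - 1)) + f (j + (D - 1)) := by
  simp only [weightedSum, fireAt_apply_cast hD hj, mul_add, mul_sub, mul_ite, mul_zero, mul_one,
    Finset.sum_add_distrib, Finset.sum_sub_distrib, Finset.sum_ite_eq', Finset.mem_range]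
  rw [if_pos (by omega), if_pos (by omega)]
  rcases j with _ | m
  · simp [mul_comm]
  · simp only [add_left_inj, Finset.sum_ite_eq, Finset.mem_range, if_pos (by omega : m < B),
      add_tsub_cancel_right, if_neg (Nat.succ_ne_zero m)]
    ring

def numGrains (B : ℕ) (σ : Config) : ℤ := weightedSum (fun i => i + 1) B σ

def secondMoment (B : ℕ) (σ : Config) : ℤ := weightedSum (fun i => (i : ℤ) ^ 2) B σ

theorem numGrains_fireAt (hD : 2 ≤ D) {B : ℕ} {σ : Config} {j : ℕ} (hj : D ≤ σ j)
    (hB : j + D ≤ B) : numGrains B (fireAt D σ j) = numGrains B σ := by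
  simp only [numGrains, weightedSum_fireAt hD _ hj hB]
  split_ifs with hj0
  · subst hj0; push_cast [Nat.cast_sub (by omega : 1 ≤ D)]; ring
  · push_cast [Nat.cast_sub (by omega : 1 ≤ D), Nat.cast_sub (by omega : 1 ≤ j)]; ring

theorem secondMoment_lt_fireAt (hD : 2 ≤ D) {B : ℕ} {σ : Config} {j : ℕ} (hj : D ≤ σ j)
    (hB : j + D ≤ B) : secondMoment B σ < secondMoment B (fireAt D σ j) := by
  simp only [secondMoment, weightedSum_fireAt hD _ hj hB]
  have hD' : (2 : ℤ) ≤ D := by exact_mod_cast hD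
  split_ifs with hj0
  · subst hj0; push_cast [Nat.cast_sub (by omega : 1 ≤ D)]; nlinarith
  · push_cast [Nat.cast_sub (by omega : 1 ≤ D), Nat.cast_sub (by omega : 1 ≤ j)]; nlinarith

theorem secondMoment_le_sq_numGrains (B : ℕ) (σ : Config) :
    secondMoment B σ ≤ numGrains B σ ^ 2 :=
  calc secondMoment B σ = ∑ i ∈ Finset.range B, (i : ℤ) ^ 2 * σ i := rfl
    _ ≤ ∑ i ∈ Finset.range B, (((i : ℤ) + 1) * σ i) ^ 2 :=
        Finset.sum_le_sum fun i _ => by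
          have hσ : (σ i : ℤ) ≤ (σ i : ℤ) ^ 2 := by exact_mod_cast Nat.le_self_pow two_ne_zero _
          calc (i : ℤ) ^ 2 * σ i ≤ ((i : ℤ) + 1) ^ 2 * σ i := by gcongr; omega
            _ ≤ ((i : ℤ) + 1) ^ 2 * (σ i : ℤ) ^ 2 := by gcongr
            _ = (((i : ℤ) + 1) * σ i) ^ 2 := by ring
    _ ≤ numGrains B σ ^ 2 := Finset.sum_sq_le_sq_sum_of_nonneg fun i _ => by positivity

theorem exists_reaches_stable (hD : 2 ≤ D) {B : ℕ} {σ : Config} (hσ : ∀ k, B ≤ k → σ k = 0) :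
    ∃ μ, Reaches D σ μ ∧ Stable D μ := by
  induction h : (numGrains B σ ^ 2 - secondMoment B σ).toNat using Nat.strong_induction_on
    generalizing B σ with
  | _ n ih =>
    by_cases hst : Stable D σ
    · exact ⟨σ, .refl, hst⟩
    obtain ⟨j, hj⟩ : ∃ j, D ≤ σ j := by simpa [Stable] using hst
    have hjB : j < B := by
      by_contra hjB
      have := hσ j (by omega)
      omega
    have hσ' : ∀ k, B + D ≤ k → fireAt D σ j k = 0 := fun k hk => by
      simp only [fireAt]
      rw [if_neg (by omega), if_neg (by omega), if_neg (by omega), hσ k (by omega)]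
    have hB : j + D ≤ B + D := by omega
    have hgrains : numGrains (B + D) (fireAt D σ j) = numGrains B σ :=
      (numGrains_fireAt hD hj hB).trans (weightedSum_eq_of_le hσ (by omega))
    have hmoment : secondMoment B σ < secondMoment (B + D) (fireAt D σ j) :=
      (weightedSum_eq_of_le hσ (by omega)).symm.trans_lt (secondMoment_lt_fireAt hD hj hB)
    have hbound := secondMoment_le_sq_numGrains (B + D) (fireAt D σ j)
    rw [hgrains] at hbound
    obtain ⟨μ, hreach, hμ⟩ := ih _ (by rw [hgrains]; omega) hσ' rfl
    exact ⟨μ, .head ⟨j, hj, rfl⟩ hreach, hμ⟩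

theorem stable_piCfg (hD : 2 ≤ D) {B : ℕ} {σ : Config} (hσ : ∀ k, B ≤ k → σ k = 0) :
    Stable D (piCfg D σ) :=
  (Classical.epsilon_spec (exists_reaches_stable hD hσ)).2

theorem stable_piN (hD : 2 ≤ D) (N : ℕ) : Stable D (piN D N) :=
  stable_piCfg hD (B := 1) fun _ hk => if_neg (by omega)

theorem Exec.apply_cast_eq (hD : 2 ≤ D) {σ σ' : Config} {s : List ℕ} (h : Exec D σ s σ')
    (i : ℕ) :
    (σ' i : ℤ) = σ i + ((D : ℤ) - 1) * s.count (i + 1) + (s.map (· + (D - 1))).count i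
      - D * s.count i := by
  induction s generalizing σ with
  | nil => simp [show σ' = σ from h]
  | cons j s ih =>
    rw [ih h.2, fireAt_apply_cast hD h.1]
    simp only [List.map_cons, List.count_cons, beq_iff_eq]
    split_ifs <;> first | omega | (push_cast; ring)

theorem exec_append_iff {σ σ' : Config} {p q : List ℕ} :
    Exec D σ (p ++ q) σ' ↔ ∃ τ, Exec D σ p τ ∧ Exec D τ q σ' := by
  induction p generalizing σ with
  | nil => simp [Exec]
  | cons j p ih => simp [Exec, ih, and_assoc]

theorem Stable.apply_lt_of_exec_addGrain_of_mem (hD : 2 ≤ D) {μ τ : Config} {p : List ℕ}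
    {j : ℕ} (hμ : Stable D μ) (hp : Exec D (addGrain μ) p τ) (hnd : p.Nodup) (hj : j ∈ p) :
    τ j < D := by
  have hcount := hp.apply_cast_eq hD j
  have hfired : p.count j = 1 := List.count_eq_one_of_mem hnd hj
  have hright : p.count (j + 1) ≤ 1 := List.nodup_iff_count_le_one.1 hnd _
  have hleft : (p.map (· + (D - 1))).count j ≤ 1 :=
    List.nodup_iff_count_le_one.1 (hnd.map (add_left_injective _)) _
  have hright' : ((D : ℤ) - 1) * p.count (j + 1) ≤ D - 1 :=
    mul_le_of_le_one_right (by omega) (by exact_mod_cast hright)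
  have hμj := hμ j
  rw [hfired] at hcount
  by_cases hj0 : j = 0
  · subst hj0
    have hleft0 : (p.map (· + (D - 1))).count 0 = 0 :=
      List.count_eq_zero.2 fun h => by obtain ⟨k, -, hk⟩ := List.mem_map.1 h; omega
    simp only [addGrain, if_true, hleft0] at hcount
    omega
  · simp only [addGrain, hj0, if_false] at hcount
    omega

theorem Stable.nodup_of_exec_addGrain (hD : 2 ≤ D) {μ σ' : Config} {s : List ℕ}
    (hμ : Stable D μ) (hs : Exec D (addGrain μ) s σ') : s.Nodup := by
  suffices ∀ p q, s = p ++ q → p.Nodup from this s [] (List.append_nil s).symm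
  intro p
  induction p using List.reverseRecOn with
  | nil => simp
  | append_singleton p j ih =>
    intro q hpq
    have hp := ih (j :: q) (by simp [hpq])
    rw [hpq, List.append_assoc, List.singleton_append] at hs
    obtain ⟨τ, hτ, hjq⟩ := exec_append_iff.1 hs
    have hjp : j ∉ p := fun hj => (hμ.apply_lt_of_exec_addGrain_of_mem hD hτ hp hj).not_ge hjq.1
    simpa [List.nodup_append, hp] using fun a ha (h : a = j) => hjp (h ▸ ha)

end

/-- Each column is fired at most once during any stabilization of
`π(N)^{↓0}`: for every strategy `s` from `π(N)^{↓0}` to `π(N+1)` and every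
column `i`, `|s|_i ∈ {0,1}`. -/
theorem strategy_fires_each_column_at_most_once (D : ℕ) (hD : 2 ≤ D)
    (N : ℕ) (s : List ℕ)
    (hs : Exec D (addGrain (piN D N)) s (piN D (N + 1))) :
    ∀ i : ℕ, s.count i ≤ 1 :=
  List.nodup_iff_count_le_one.1 ((stable_piN hD N).nodup_of_exec_addGrain hD hs)
end

section
/- For every word v in the language L = {ab·u : u a word over {a,b}} ∪ {ε, a}, the maximal height satisfies g(t(v)) ≤ g(v)/4 + 1; equivalently, g(t(v)) − 4/3 ≤ (g(v) − 4/3)/4. -/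
/-- States of the KSPM(3) transducer. -/
inductive TSt | s00 | s10 | s20 | s11 | s12 | s21 | s22
  deriving DecidableEq

/-- Letters: `a = false`, `b = true`. Transition function of the transducer:
(state, input letter) ↦ (next state, output word). -/
def tStep : TSt → Bool → TSt × List Bool
  | .s00, false => (.s10, [])
  | .s00, true  => (.s11, [])
  | .s10, false => (.s20, [])
  | .s10, true  => (.s21, [])
  | .s20, false => (.s11, [])
  | .s20, true  => (.s12, [])
  | .s11, false => (.s21, [])
  | .s11, true  => (.s22, [])
  | .s12, false => (.s22, [])
  | .s12, true  => (.s21, [true])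
  | .s21, false => (.s12, [false])
  | .s21, true  => (.s11, [false, true])
  | .s22, false => (.s11, [true, false])
  | .s22, true  => (.s12, [true, false])

/-- Run the transducer on a word from a given state, concatenating outputs. -/
def runT : TSt → List Bool → List Bool
  | _, [] => []
  | q, x :: u => (tStep q x).2 ++ runT (tStep q x).1 u

/-- `t(u)` : run from the initial state `00`. -/
def tT (u : List Bool) : List Bool := runT .s00 u

/-- `t'(u)` : run from the state `21`. -/
def tT' (u : List Bool) : List Bool := runT .s21 u

/-- `w` is a prefix of the infinite periodic word `(ab)^ω` (with `a = false`,
`b = true`): the letter at position `i` is `a` iff `i` is even. -/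
def PrefixAB (w : List Bool) : Prop :=
  ∀ i (hi : i < w.length), w.get ⟨i, hi⟩ = decide (i % 2 = 1)

/-- The language `L = {ab·u : u word} ∪ {ε, a}`. -/
def LangL : Set (List Bool) :=
  {w | ∃ u : List Bool, w = false :: true :: u} ∪ {[], [false]}

/-- The height `h(u) = | |u|_a − |u|_b |`. -/
def hgt (u : List Bool) : ℕ :=
  ((u.count false : ℤ) - (u.count true : ℤ)).natAbs

/-- The maximal height `g(u) = max { h(u') : u' prefix of u }`. -/
def gmax (u : List Bool) : ℕ := (u.inits.map hgt).foldr max 0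

/-!
On the recurrent states `11, 12, 21, 22` every transition `q --x/o--> q'` satisfies
`4·bal o = bal x + φ q − φ q'` for a potential `φ` with values in `[-2, 1]`, where
`bal = |·|_a − |·|_b`. Summing along a run, four times the signed height of an output prefix
is the signed height of the corresponding input prefix up to a bounded error. A word of `L`
other than `ε, a` starts with `ab`, which leaves the transducer in state `21` with no output,
and there the error is at most `4`.
-/

def bal (u : List Bool) : ℤ := (u.count false : ℤ) - u.count true

@[simp] lemma bal_nil : bal [] = 0 := rfl

@[simp] lemma bal_cons (x : Bool) (u : List Bool) :
    bal (x :: u) = (if x then -1 else 1) + bal u := by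
  cases x <;> simp [bal] <;> ring

@[simp] lemma bal_append (u v : List Bool) : bal (u ++ v) = bal u + bal v := by
  simp only [bal, List.count_append]; push_cast; ring

lemma hgt_eq_natAbs_bal (u : List Bool) : hgt u = (bal u).natAbs := rfl

lemma gmax_le_iff {u : List Bool} {n : ℕ} : gmax u ≤ n ↔ ∀ p, p <+: u → hgt p ≤ n := by
  simp only [gmax, ← List.mem_inits]
  constructor
  · exact fun h p hp => le_trans (List.le_max_of_le (List.mem_map_of_mem hp) le_rfl) h
  · intro h
    exact List.max_le_of_forall_le _ _ (by simpa using h)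

lemma List.IsPrefix.prefix_or_exists_of_append {α : Type*} {w l₁ l₂ : List α}
    (h : w <+: l₁ ++ l₂) : w <+: l₁ ∨ ∃ w', w = l₁ ++ w' ∧ w' <+: l₂ := by
  obtain ⟨t, ht⟩ := h
  rcases List.append_eq_append_iff.mp ht with ⟨r, hr, -⟩ | ⟨w', hw', ht'⟩
  · exact Or.inl ⟨r, hr.symm⟩
  · exact Or.inr ⟨w', hw', t, ht'.symm⟩

def IsRecurrent (q : TSt) : Prop := q = .s11 ∨ q = .s12 ∨ q = .s21 ∨ q = .s22

def potential : TSt → ℤ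
  | .s21 => 1 | .s22 => -1 | .s12 => -2 | _ => 0

lemma abs_potential_le (q : TSt) : |potential q| ≤ 2 := by
  cases q <;> simp [potential]

lemma IsRecurrent.tStep_fst {q : TSt} (hq : IsRecurrent q) (x : Bool) :
    IsRecurrent (tStep q x).1 := by
  rcases hq with rfl | rfl | rfl | rfl <;> cases x <;> simp [IsRecurrent, tStep]

lemma four_mul_bal_tStep {q : TSt} (hq : IsRecurrent q) (x : Bool) :
    4 * bal (tStep q x).2 = bal [x] + potential q - potential (tStep q x).1 := by
  rcases hq with rfl | rfl | rfl | rfl <;> cases x <;> simp [tStep, potential]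

lemma abs_four_mul_bal_sub_potential_le {q : TSt} (hq : IsRecurrent q) (x : Bool)
    {r : List Bool} (hr : r <+: (tStep q x).2) : |4 * bal r - potential q| ≤ 3 := by
  rw [← List.mem_inits] at hr
  rcases hq with rfl | rfl | rfl | rfl <;> cases x <;>
    simp only [tStep, List.inits, List.map, List.mem_cons, List.not_mem_nil, or_false] at hr <;>
    rcases hr with rfl | rfl | rfl <;> simp [potential]

lemma exists_prefix_abs_four_mul_bal_sub_le {q : TSt} (hq : IsRecurrent q) {u w : List Bool}
    (hw : w <+: runT q u) : ∃ p, p <+: u ∧ |4 * bal w - bal p - potential q| ≤ 3 := by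
  induction u generalizing q w with
  | nil =>
    obtain rfl : w = [] := List.prefix_nil.mp hw
    exact ⟨[], List.nil_prefix, by simpa using (abs_potential_le q).trans (by norm_num)⟩
  | cons x u ih =>
    rcases hw.prefix_or_exists_of_append with hw | ⟨w', rfl, hw'⟩
    · exact ⟨[], List.nil_prefix, by simpa using abs_four_mul_bal_sub_potential_le hq x hw⟩
    · obtain ⟨p, hp, hbound⟩ := ih (hq.tStep_fst x) hw'
      refine ⟨x :: p, List.cons_prefix_cons.mpr ⟨rfl, hp⟩, ?_⟩
      have hstep := four_mul_bal_tStep hq x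
      rw [bal_append, bal_cons]
      simp only [bal_cons, bal_nil] at hstep
      convert hbound using 2
      linarith

lemma four_mul_gmax_runT_le {q : TSt} (hq : IsRecurrent q) {u : List Bool} {G : ℕ}
    (hG : ∀ p, p <+: u → hgt p ≤ G) :
    4 * gmax (runT q u) ≤ G + (potential q).natAbs + 3 := by
  rw [mul_comm, ← Nat.le_div_iff_mul_le four_pos, gmax_le_iff]
  intro w hw
  obtain ⟨p, hp, hbound⟩ := exists_prefix_abs_four_mul_bal_sub_le hq hw
  have hpG := hG p hp
  rw [hgt_eq_natAbs_bal] at hpG ⊢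
  rw [abs_le] at hbound
  omega

/-- For every `v` in the language `L`, the maximal height satisfies
`g(t(v)) ≤ g(v)/4 + 1`. -/
theorem transducer_maximal_height_decrease :
    ∀ v ∈ LangL, (gmax (tT v) : ℝ) ≤ (gmax v : ℝ) / 4 + 1 := by
  rintro v (⟨u, rfl⟩ | hv)
  · have hG : ∀ p, p <+: u → hgt p ≤ gmax (false :: true :: u) := fun p hp => by
      simpa [hgt_eq_natAbs_bal] using
        gmax_le_iff.mp le_rfl ([false, true] ++ p) ((List.prefix_append_right_inj _).mpr hp)
    have hbound : (4 * gmax (tT (false :: true :: u)) : ℝ) ≤ gmax (false :: true :: u) + 4 := by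
      exact_mod_cast four_mul_gmax_runT_le (Or.inr (Or.inr (Or.inl rfl))) hG
    linarith
  · rcases hv with rfl | rfl <;> norm_num [tT, runT, tStep, gmax, hgt]
end

section
/- Fix N and let L = L(D,N). Let s^k (with 1 ≤ k ≤ N) be a long avalanche up to N and let P be the largest peak of s^k. Then: π(k)_i = π(k−1)_i for all i with L+D−1 ≤ i < P; π(k)_P = π(k−1)_P − (D−1) = 0; π(k)_i = π(k−1)_i + 1 for all i with P < i ≤ P+D−1; and π(k)_i = π(k−1)_i for all i > P+D−1. -/
open scoped Classical

/-!
Every strategy from `σ` to `σ'` satisfies the balance equation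
`σ' j + D c_j = σ j + (D - 1) c_{j+1} + c_{j-(D-1)}`, where `c_j` counts the firings of `j`.
Firings commute and a quadratic potential (grains only move right) bounds the length of
strategies, so `π` is well defined and all strategies between two configurations are permutations
of each other; in particular the lexicographically least one, the avalanche, exists. Starting
from the stable `π(k-1)` plus one grain, no column can be fired twice. The largest peak `P` is
the largest fired column, and by density every column of `[L, P]` is fired, so above `L + D - 1`
the balance equation reads off `π(k) - π(k-1)`; at `P` stability of `π(k-1)` forces
`π(k-1)_P = D - 1`.
-/

open Finset

section

variable {D : ℕ}

lemma fireAt_add_ite (hD : 2 ≤ D) {σ : Config} {i : ℕ} (hi : D ≤ σ i) (j : ℕ) :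
    fireAt D σ i j + (if i = j then D else 0) =
      σ j + (if i = j + 1 then D - 1 else 0) + (if i + (D - 1) = j then 1 else 0) := by
  rcases eq_or_ne j i with rfl | hji
  · simp only [fireAt, if_true]
    split_ifs <;> omega
  · simp only [fireAt, if_neg hji]
    split_ifs <;> omega

lemma le_fireAt_of_ne (σ : Config) {i j : ℕ} (h : j ≠ i) : σ j ≤ fireAt D σ i j := by
  simp only [fireAt, if_neg h]
  split_ifs <;> omega

lemma fireAt_comm {σ : Config} {i j : ℕ} (hij : i ≠ j) (hi : D ≤ σ i) (hj : D ≤ σ j) :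
    fireAt D (fireAt D σ i) j = fireAt D (fireAt D σ j) i := by
  funext m
  unfold fireAt
  split_ifs <;> omega

lemma stepRel_diamond {σ σ₁ σ₂ : Config} (h₁ : StepRel D σ σ₁) (h₂ : StepRel D σ σ₂) :
    ∃ τ, Relation.ReflGen (StepRel D) σ₁ τ ∧ Reaches D σ₂ τ := by
  obtain ⟨i, hi, rfl⟩ := h₁
  obtain ⟨j, hj, rfl⟩ := h₂
  rcases eq_or_ne i j with rfl | hij
  · exact ⟨_, .refl, .refl⟩
  exact ⟨fireAt D (fireAt D σ i) j, .single ⟨j, hj.trans (le_fireAt_of_ne σ hij.symm), rfl⟩,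
    .single ⟨i, hi.trans (le_fireAt_of_ne σ hij), fireAt_comm hij hi hj⟩⟩

lemma Reaches.eq_of_stable {σ τ : Config} (hσ : Stable D σ) (h : Reaches D σ τ) : τ = σ := by
  induction h using Relation.ReflTransGen.head_induction_on with
  | refl => rfl
  | head hstep _ _ =>
    obtain ⟨i, hi, _⟩ := hstep
    exact absurd hi (hσ i).not_ge

lemma Reaches.reaches_of_stable {σ σ₁ μ : Config} (h₁ : Reaches D σ σ₁)
    (hμ : Reaches D σ μ) (hstable : Stable D μ) : Reaches D σ₁ μ := by
  obtain ⟨τ, h₁τ, hμτ⟩ := Relation.church_rosser (fun _ _ _ => stepRel_diamond) h₁ hμ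
  rwa [Reaches.eq_of_stable hstable hμτ] at h₁τ

/-- `σ` holds `N` grains, all on columns `< N`: the height of column `j` is `∑_{m ≥ j} σ m`,
so the total number of grains is `∑ m, (m + 1) * σ m`. -/
def HasGrains (N : ℕ) (σ : Config) : Prop :=
  (∀ m, N ≤ m → σ m = 0) ∧ ∑ m ∈ range N, (m + 1) * σ m = N

lemma sum_mul_fireAt (hD : 2 ≤ D) (w : ℕ → ℕ) {σ : Config} {i B : ℕ} (hi : D ≤ σ i)
    (hB : i + D ≤ B) :
    ∑ m ∈ range B, w m * fireAt D σ i m + w i * D =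
      ∑ m ∈ range B, w m * σ m + (if i = 0 then 0 else w (i - 1) * (D - 1)) + w (i + (D - 1)) := by
  have hsum := Finset.sum_congr rfl fun m (_ : m ∈ range B) =>
    congrArg (w m * ·) (fireAt_add_ite hD hi m)
  simp only [mul_add, mul_ite, mul_zero, mul_one, Finset.sum_add_distrib, Finset.sum_ite_eq,
    Finset.mem_range, if_pos (show i < B by omega), if_pos (show i + (D - 1) < B by omega)] at hsum
  rw [hsum]
  congr 2
  rcases i with _ | i
  · simp
  · simp [Finset.sum_ite_eq, show i < B by omega]

lemma HasGrains.add_le (hD : 2 ≤ D) {N : ℕ} {σ : Config} (h : HasGrains N σ) {i : ℕ}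
    (hi : D ≤ σ i) : i + D ≤ N := by
  have hiN : i < N := by
    by_contra hN
    have := h.1 i (by omega)
    omega
  have hterm : (i + 1) * σ i ≤ N :=
    h.2 ▸ Finset.single_le_sum (f := fun m => (m + 1) * σ m) (fun _ _ => Nat.zero_le _)
      (Finset.mem_range.2 hiN)
  nlinarith

lemma HasGrains.fireAt (hD : 2 ≤ D) {N : ℕ} {σ : Config} (h : HasGrains N σ) {i : ℕ}
    (hi : D ≤ σ i) : HasGrains N (fireAt D σ i) := by
  have hiN := h.add_le hD hi
  refine ⟨fun m hm => ?_, ?_⟩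
  · have := fireAt_add_ite hD hi m
    rw [h.1 m hm] at this
    split_ifs at this <;> omega
  · have e := sum_mul_fireAt hD (· + 1) hi hiN
    rw [h.2] at e
    rcases i with _ | i
    · simp only [zero_add, one_mul, ↓reduceIte, add_zero] at e
      omega
    · obtain ⟨d, rfl⟩ : ∃ d, D = d + 1 := ⟨D - 1, by omega⟩
      simp only [Nat.add_sub_cancel, add_eq_zero, one_ne_zero, and_false, if_false] at e
      nlinarith

/-- Every grain only moves to the right, so the potential `∑ m, m (m + 1) σ m` grows by
`D (D - 1)` at each firing. -/
lemma sum_potential_fireAt (hD : 2 ≤ D) {σ : Config} {i B : ℕ} (hi : D ≤ σ i) (hB : i + D ≤ B) :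
    ∑ m ∈ range B, m * (m + 1) * fireAt D σ i m =
      ∑ m ∈ range B, m * (m + 1) * σ m + D * (D - 1) := by
  have e := sum_mul_fireAt hD (fun m => m * (m + 1)) hi hB
  obtain ⟨d, rfl⟩ : ∃ d, D = d + 1 := ⟨D - 1, by omega⟩
  rcases i with _ | i
  · simp only [zero_add, mul_one, zero_mul, add_zero, ↓reduceIte, add_tsub_cancel_right] at e ⊢
    linarith
  · simp only [Nat.add_sub_cancel, add_eq_zero, one_ne_zero, and_false, if_false] at e ⊢
    have key : (i + 1) * (i + 1 + 1) * (d + 1) + (d + 1) * d =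
        i * (i + 1) * d + (i + 1 + d) * (i + 1 + d + 1) := by ring
    linarith

lemma HasGrains.sum_potential_le {N : ℕ} {σ : Config} (h : HasGrains N σ) :
    ∑ m ∈ range N, m * (m + 1) * σ m ≤ N * N := by
  calc ∑ m ∈ range N, m * (m + 1) * σ m ≤ ∑ m ∈ range N, N * ((m + 1) * σ m) := by
        refine Finset.sum_le_sum fun m hm => ?_
        rw [mul_assoc]
        exact Nat.mul_le_mul_right _ (Finset.mem_range.1 hm).le
    _ = N * N := by rw [← Finset.mul_sum, h.2]

theorem HasGrains.exists_stable (hD : 2 ≤ D) {N : ℕ} {σ : Config} (h : HasGrains N σ) :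
    ∃ μ, Reaches D σ μ ∧ Stable D μ := by
  by_cases hσ : Stable D σ
  · exact ⟨σ, .refl, hσ⟩
  obtain ⟨i, hi⟩ : ∃ i, D ≤ σ i := by simpa [Stable] using hσ
  obtain ⟨μ, hreach, hμ⟩ := (h.fireAt hD hi).exists_stable hD
  exact ⟨μ, .head ⟨i, hi, rfl⟩ hreach, hμ⟩
termination_by N * N - ∑ m ∈ range N, m * (m + 1) * σ m
decreasing_by
  have := sum_potential_fireAt hD hi (h.add_le hD hi)
  have := (h.fireAt hD hi).sum_potential_le
  have : 2 * 1 ≤ D * (D - 1) := Nat.mul_le_mul hD (by omega)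
  omega

lemma hasGrains_grains (N : ℕ) : HasGrains N (grains N) := by
  refine ⟨fun m hm => ?_, ?_⟩
  · simp only [grains]; split_ifs <;> omega
  · rcases N with _ | N
    · simp
    · rw [Finset.sum_eq_single_of_mem 0 (by simp) (fun m _ hm => by simp [grains, hm])]
      simp [grains]

lemma Reaches.exists_exec {σ σ' : Config} (h : Reaches D σ σ') : ∃ s, Exec D σ s σ' := by
  induction h using Relation.ReflTransGen.head_induction_on with
  | refl => exact ⟨[], rfl⟩
  | head hstep _ ih =>
    obtain ⟨i, hi, rfl⟩ := hstep
    obtain ⟨s, hs⟩ := ih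
    exact ⟨i :: s, hi, hs⟩

lemma exec_append {σ σ' : Config} {s t : List ℕ} :
    Exec D σ (s ++ t) σ' ↔ ∃ μ, Exec D σ s μ ∧ Exec D μ t σ' := by
  induction s generalizing σ with
  | nil => exact ⟨fun h => ⟨σ, rfl, h⟩, fun ⟨_, rfl, h⟩ => h⟩
  | cons a s ih =>
    simp only [List.cons_append, Exec, ih]
    exact ⟨fun ⟨ha, μ, h₁, h₂⟩ => ⟨μ, ⟨ha, h₁⟩, h₂⟩, fun ⟨μ, ⟨ha, h₁⟩, h₂⟩ => ⟨ha, μ, h₁, h₂⟩⟩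

/-- The last term counts the firings of `j - (D - 1)`, without truncated subtraction. -/
lemma Exec.count_balance (hD : 2 ≤ D) {σ σ' : Config} {s : List ℕ} (h : Exec D σ s σ') (j : ℕ) :
    σ' j + D * s.count j =
      σ j + (D - 1) * s.count (j + 1) + (s.map (· + (D - 1))).count j := by
  induction s generalizing σ with
  | nil => simp_all [Exec]
  | cons a s ih =>
    obtain ⟨ha, h⟩ := h
    have hfire := fireAt_add_ite hD ha j
    have hrest := ih h
    simp only [List.count_cons, List.map_cons, beq_iff_eq, mul_add]
    split_ifs at * <;> omega

/-- The balance equation at column `j + (D - 1)` determines how often `j` is fired from how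
often the columns above `j` are, and nothing is fired above the largest fired column. -/
lemma Exec.perm (hD : 2 ≤ D) {σ σ' : Config} {s t : List ℕ} (hs : Exec D σ s σ')
    (ht : Exec D σ t σ') : s.Perm t := by
  rw [List.perm_iff_count]
  suffices ∀ d j, (s ++ t).sum < j + d → s.count j = t.count j from
    fun j => this ((s ++ t).sum + 1) j (by omega)
  intro d
  induction d with
  | zero =>
    intro j hj
    have hmem : ∀ u ∈ s ++ t, u ≠ j := fun u hu => by have := List.le_sum_of_mem hu; omega
    rw [List.count_eq_zero_of_not_mem fun h => hmem j (List.mem_append_left t h) rfl,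
      List.count_eq_zero_of_not_mem fun h => hmem j (List.mem_append_right s h) rfl]
  | succ d ih =>
    intro j hj
    have es := hs.count_balance hD (j + (D - 1))
    have et := ht.count_balance hD (j + (D - 1))
    have hinj : Function.Injective (· + (D - 1)) := add_left_injective _
    rw [List.count_map_of_injective _ _ hinj] at es et
    rw [ih (j + (D - 1)) (by omega), ih (j + (D - 1) + 1) (by omega)] at es
    omega

lemma exists_exec_lexLeast (hD : 2 ≤ D) {σ σ' : Config} (h : Reaches D σ σ') :
    ∃ s, Exec D σ s σ' ∧ ∀ t, Exec D σ t σ' → s = t ∨ List.Lex (· < ·) s t := by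
  obtain ⟨s₀, hs₀⟩ := h.exists_exec
  have hfin : {s | Exec D σ s σ'}.Finite :=
    s₀.permutations.finite_toSet.subset fun s hs => List.mem_permutations.2 (hs.perm hD hs₀)
  obtain ⟨s, hs, hmin⟩ := Set.exists_min_image _ id hfin ⟨s₀, hs₀⟩
  exact ⟨s, hs, fun t ht => (hmin t ht).eq_or_lt⟩

lemma Exec.nodup_of_stable (hD : 2 ≤ D) {τ σ' : Config} (hτ : Stable D τ) {s : List ℕ}
    (h : Exec D (addGrain τ) s σ') : s.Nodup := by
  induction s using List.reverseRecOn generalizing σ' with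
  | nil => exact List.nodup_nil
  | append_singleton s i ih =>
    obtain ⟨μ, hs, hi, -⟩ := exec_append.1 h
    have hnd := ih hs
    refine List.nodup_append.2 ⟨hnd, List.nodup_singleton i, fun j hj i' hi' => ?_⟩
    rw [List.mem_singleton] at hi'
    rintro rfl
    subst hi'
    have hbal := hs.count_balance hD j
    rw [List.count_eq_one_of_mem hnd hj] at hbal
    have hup : (D - 1) * s.count (j + 1) ≤ (D - 1) * 1 :=
      Nat.mul_le_mul_left _ (List.nodup_iff_count_le_one.1 hnd (j + 1))
    have hdown := List.nodup_iff_count_le_one.1 (hnd.map (add_left_injective (D - 1))) j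
    have := hτ j
    rcases eq_or_ne j 0 with rfl | hj0
    · have : (s.map (· + (D - 1))).count 0 = 0 := List.count_eq_zero.2 (by
        simp only [List.mem_map, not_exists, not_and]; omega)
      simp only [addGrain, if_true] at hbal
      omega
    · simp only [addGrain, if_neg hj0] at hbal
      omega

lemma piN_spec (hD : 2 ≤ D) (N : ℕ) : Reaches D (grains N) (piN D N) ∧ Stable D (piN D N) :=
  Classical.epsilon_spec ((hasGrains_grains N).exists_stable hD)

lemma addGrain_fireAt {σ : Config} {i : ℕ} (hi : D ≤ σ i) :
    addGrain (fireAt D σ i) = fireAt D (addGrain σ) i := by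
  funext m
  simp only [addGrain, fireAt]
  split_ifs <;> omega

lemma Reaches.addGrain {σ τ : Config} (h : Reaches D σ τ) :
    Reaches D (addGrain σ) (addGrain τ) := by
  induction h with
  | refl => exact .refl
  | tail _ hstep ih =>
    obtain ⟨i, hi, rfl⟩ := hstep
    refine .tail ih ⟨i, ?_, addGrain_fireAt hi⟩
    simp only [_root_.addGrain]
    split_ifs <;> omega

lemma grains_eq_addGrain {k : ℕ} (hk : 1 ≤ k) : grains k = addGrain (grains (k - 1)) := by
  funext m
  simp only [grains, addGrain]
  split_ifs <;> omega

lemma exec_avalanche (hD : 2 ≤ D) {k : ℕ} (hk : 1 ≤ k) :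
    Exec D (addGrain (piN D (k - 1))) (avalanche D k) (piN D k) := by
  have hstart : Reaches D (grains k) (addGrain (piN D (k - 1))) :=
    grains_eq_addGrain hk ▸ (piN_spec hD (k - 1)).1.addGrain
  have hreach := Reaches.reaches_of_stable hstart (piN_spec hD k).1 (piN_spec hD k).2
  exact (Classical.epsilon_spec (exists_exec_lexLeast hD hreach)).1

lemma IsPeak.mem {s : List ℕ} {p : ℕ} (h : IsPeak s p) : p ∈ s := by
  obtain ⟨t, rfl, -⟩ := h
  exact List.get_mem s t

lemma isPeak_of_forall_le {s : List ℕ} {M : ℕ} (hM : M ∈ s) (hle : ∀ j ∈ s, j ≤ M) :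
    IsPeak s M := by
  refine ⟨⟨s.idxOf M, List.idxOf_lt_length_iff.2 hM⟩, List.getElem_idxOf _, fun t ht => ?_⟩
  have hne : s.get t ≠ M := by
    simpa using List.not_of_lt_findIdx (p := (· == M)) ht
  exact lt_of_le_of_ne (hle _ (List.get_mem s t)) hne

/-- The largest column of a strategy is fired for the first time as a peak. -/
lemma le_of_forall_isPeak_le {s : List ℕ} {P : ℕ} (hP : ∀ q, IsPeak s q → q ≤ P) {j : ℕ}
    (hj : j ∈ s) : j ≤ P := by
  obtain ⟨M, hM, hle⟩ := s.toFinset.exists_max_image id ⟨j, List.mem_toFinset.2 hj⟩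
  simp only [List.mem_toFinset, id] at hM hle
  exact (hle j hj).trans (hP M (isPeak_of_forall_le hM hle))

lemma DenseFrom.mono {s : List ℕ} {l l' : ℕ} (h : DenseFrom s l) (hl : l ≤ l') :
    DenseFrom s l' := by
  obtain ⟨m, hmem, hout⟩ := h
  exact ⟨m, fun i hi => hmem i (hl.trans hi), hout⟩

lemma DenseFrom.mem {s : List ℕ} {l p j : ℕ} (h : DenseFrom s l) (hp : p ∈ s) (hlj : l ≤ j)
    (hjp : j ≤ p) : j ∈ s := by
  obtain ⟨m, hmem, hout⟩ := h
  exact hmem j hlj (hjp.trans (not_lt.1 fun hm => hout p hm hp))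

lemma denseFrom_Lp (D k : ℕ) : DenseFrom (avalanche D k) (Lp D k) := by
  refine Nat.sInf_mem (s := {l | DenseFrom (avalanche D k) l})
    ⟨(avalanche D k).sum + 1, (avalanche D k).sum, fun i hi hi' => by omega, fun i hi hmem => ?_⟩
  have := List.le_sum_of_mem hmem
  omega

lemma Exec.balance_of_fires_Icc (hD : 2 ≤ D) {σ σ' : Config} {s : List ℕ} (h : Exec D σ s σ')
    (hnd : s.Nodup) {l P : ℕ} (hfires : ∀ j, l ≤ j → (j ∈ s ↔ j ≤ P)) {i : ℕ}
    (hi : l + (D - 1) ≤ i) :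
    σ' i + (if i ≤ P then D else 0) =
      σ i + (if i < P then D - 1 else 0) + (if i ≤ P + (D - 1) then 1 else 0) := by
  have hcount : ∀ j, l ≤ j → s.count j = if j ≤ P then 1 else 0 := fun j hj => by
    rw [hnd.count, if_congr (hfires j hj) rfl rfl]
  have hbal := h.count_balance hD i
  obtain ⟨j, rfl⟩ : ∃ j, i = j + (D - 1) := ⟨i - (D - 1), by omega⟩
  rw [List.count_map_of_injective _ _ (add_left_injective _), hcount _ (by omega),
    hcount _ (by omega), hcount _ (by omega)] at hbal
  split_ifs at hbal ⊢ <;> omega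

end

/-- Effect of a long avalanche on the fixed point. If `s^k` (`1 ≤ k ≤ N`) is a
long avalanche up to `N` and `P` is its largest peak, then `π(k)` and
`π(k−1)` agree on `[L+D−1, P)`, `π(k−1)_P = D−1` and `π(k)_P = 0`, `π(k)`
exceeds `π(k−1)` by one on `(P, P+D−1]`, and they agree beyond `P+D−1`. -/
theorem long_avalanche_effect (D N k : ℕ) (hD : 2 ≤ D)
    (hk1 : 1 ≤ k) (hkN : k ≤ N)
    (hlong : Lgdc D N + D - 1 ∈ avalanche D k)
    (P : ℕ) (hP : IsPeak (avalanche D k) P)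
    (hPmax : ∀ q, IsPeak (avalanche D k) q → q ≤ P) :
    (∀ i, Lgdc D N + D - 1 ≤ i → i < P → piN D k i = piN D (k - 1) i) ∧
    piN D (k - 1) P = D - 1 ∧ piN D k P = 0 ∧
    (∀ i, P < i → i ≤ P + (D - 1) → piN D k i = piN D (k - 1) i + 1) ∧
    (∀ i, P + (D - 1) < i → piN D k i = piN D (k - 1) i) := by
  have hexec := exec_avalanche hD hk1
  have hstable := (piN_spec hD (k - 1)).2
  have hnodup := hexec.nodup_of_stable hD hstable
  have hdense : DenseFrom (avalanche D k) (Lgdc D N) :=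
    (denseFrom_Lp D k).mono (Finset.le_sup (Finset.mem_Icc.2 ⟨hk1, hkN⟩))
  have hfires : ∀ j, Lgdc D N ≤ j → (j ∈ avalanche D k ↔ j ≤ P) := fun j hj =>
    ⟨le_of_forall_isPeak_le hPmax, hdense.mem hP.mem hj⟩
  have hLP : Lgdc D N + D - 1 ≤ P := le_of_forall_isPeak_le hPmax hlong
  have key : ∀ i, Lgdc D N + D - 1 ≤ i → piN D k i + (if i ≤ P then D else 0) =
      piN D (k - 1) i + (if i < P then D - 1 else 0) + (if i ≤ P + (D - 1) then 1 else 0) :=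
    fun i hi => by
      have := hexec.balance_of_fires_Icc hD hnodup hfires (i := i) (by omega)
      simpa only [addGrain, if_neg (show i ≠ 0 by omega)] using this
  have hkeyP := key P hLP
  have hPlt := hstable P
  refine ⟨fun i hi hiP => ?_, ?_, ?_, fun i hi hiP => ?_, fun i hi => ?_⟩
  · have := key i hi; split_ifs at this <;> omega
  · split_ifs at hkeyP <;> omega
  · split_ifs at hkeyP <;> omega
  · have := key i (by omega); split_ifs at this <;> omega
  · have := key i (by omega); split_ifs at this <;> omega
end
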